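/- For every q ≥ 0 and r > 0, the type-2 leaf N_{q,r} = {(a₁,a₂,a₃) ∈ (ℝ³)³ : ⟨aᵢ,aⱼ⟩ = 0 for i ≠ j, ‖a₁‖²−‖a₂‖² = q, ‖a₂‖²−‖a₃‖² = r, ⟨a₁, a₂ × a₃⟩ < 0} is homeomorphic to the nilpotent orbit of 𝔰𝔩(2,ℂ), i.e. to the set {v ∈ ℂ³ : v₁² + v₂² + v₃² = 0, v ≠ 0}. -/

import Mathlib

open scoped RealInnerProductSpace

noncomputable section

/-- `ℝ³` with the standard (Euclidean) inner product. -/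
abbrev E3 : Type := EuclideanSpace ℝ (Fin 3)

/-- The cross product on `ℝ³`. -/
def cross (u v : E3) : E3 :=
  (WithLp.equiv 2 (Fin 3 → ℝ)).symm
    (crossProduct ((WithLp.equiv 2 (Fin 3 → ℝ)) u) ((WithLp.equiv 2 (Fin 3 → ℝ)) v))

/-- `Φ(a₁,a₂,a₃) = ⟨a₁, a₂ × a₃⟩`. -/
def Phi (a : E3 × E3 × E3) : ℝ := ⟪a.1, cross a.2.1 a.2.2⟫

/-- The five Casimir functions collected into a map `(ℝ³)³ → ℝ⁵`. -/
def casimir (a : E3 × E3 × E3) : Fin 5 → ℝ :=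
  ![⟪a.1, a.2.1⟫, ⟪a.2.1, a.2.2⟫, ⟪a.2.2, a.1⟫,
    ‖a.1‖ ^ 2 - ‖a.2.1‖ ^ 2, ‖a.2.1‖ ^ 2 - ‖a.2.2‖ ^ 2]

/-- The vector field `V₀(a) = (a₂×a₃, a₃×a₁, a₁×a₂)`. -/
def V0 (a : E3 × E3 × E3) : E3 × E3 × E3 :=
  (cross a.2.1 a.2.2, cross a.2.2 a.1, cross a.1 a.2.1)

/-- The vector field `V₁(a) = (0, a₂×a₁, a₃×a₁)`. -/
def V1 (a : E3 × E3 × E3) : E3 × E3 × E3 :=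
  (0, cross a.2.1 a.1, cross a.2.2 a.1)

/-- The vector field `V₂(a) = (a₁×a₂, 0, a₃×a₂)`. -/
def V2 (a : E3 × E3 × E3) : E3 × E3 × E3 :=
  (cross a.1 a.2.1, 0, cross a.2.2 a.2.1)

/-- The vector field `V₃(a) = (a₁×a₃, a₂×a₃, 0)`. -/
def V3 (a : E3 × E3 × E3) : E3 × E3 × E3 :=
  (cross a.1 a.2.2, cross a.2.1 a.2.2, 0)


/-- The normal-form leaf `N_{q,r}`. -/
def Nqr (q r : ℝ) : Set (E3 × E3 × E3) :=
  {a | ⟪a.1, a.2.1⟫ = 0 ∧ ⟪a.2.1, a.2.2⟫ = 0 ∧ ⟪a.2.2, a.1⟫ = 0 ∧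
    ‖a.1‖ ^ 2 - ‖a.2.1‖ ^ 2 = q ∧ ‖a.2.1‖ ^ 2 - ‖a.2.2‖ ^ 2 = r ∧ Phi a < 0}

/-- The nilpotent cone of `𝔰𝔩(2,ℂ) ≅ ℂ³` minus the origin. -/
def nilCone : Set (Fin 3 → ℂ) :=
  {v | v 0 ^ 2 + v 1 ^ 2 + v 2 ^ 2 = 0 ∧ v ≠ 0}

lemma inner3 (u v : E3) : ⟪u,v⟫ = u 0 * v 0 + u 1 * v 1 + u 2 * v 2 := by
  simp [PiLp.inner_apply, RCLike.inner_apply, Fin.sum_univ_three]; ring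

lemma normsq3 (u : E3) : ‖u‖^2 = u 0^2 + u 1^2 + u 2^2 := by
  rw [← real_inner_self_eq_norm_sq, inner3]; ring

lemma cross_apply0 (u v : E3) : cross u v 0 = u 1 * v 2 - u 2 * v 1 := by
  simp [cross, crossProduct]
lemma cross_apply1 (u v : E3) : cross u v 1 = u 2 * v 0 - u 0 * v 2 := by
  simp [cross, crossProduct]
lemma cross_apply2 (u v : E3) : cross u v 2 = u 0 * v 1 - u 1 * v 0 := by
  simp [cross, crossProduct]

lemma smul_apply3 (c : ℝ) (u : E3) (i : Fin 3) : (c • u) i = c * u i := rfl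

lemma E3ext' {u v : E3} (h0 : u 0 = v 0) (h1 : u 1 = v 1) (h2 : u 2 = v 2) : u = v := by
  ext i; fin_cases i <;> assumption

lemma cross_smul_left (c : ℝ) (u v : E3) : cross (c • u) v = c • cross u v := by
  refine E3ext' ?_ ?_ ?_
  · rw [smul_apply3, cross_apply0, cross_apply0, smul_apply3, smul_apply3]; ring
  · rw [smul_apply3, cross_apply1, cross_apply1, smul_apply3, smul_apply3]; ring
  · rw [smul_apply3, cross_apply2, cross_apply2, smul_apply3, smul_apply3]; ring

lemma inner_cross_self_left (u v : E3) : ⟪cross u v, u⟫ = 0 := by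
  rw [inner3, cross_apply0, cross_apply1, cross_apply2]; ring

lemma inner_cross_self_right (u v : E3) : ⟪cross u v, v⟫ = 0 := by
  rw [inner3, cross_apply0, cross_apply1, cross_apply2]; ring

lemma lagrange (u v : E3) : ‖cross u v‖^2 = ‖u‖^2 * ‖v‖^2 - ⟪u,v⟫^2 := by
  rw [normsq3, normsq3, normsq3, inner3, cross_apply0, cross_apply1, cross_apply2]; ring

lemma gram_id (a b c : E3) :
    ⟪a, cross b c⟫^2 = ‖a‖^2*‖b‖^2*‖c‖^2 + 2*⟪a,b⟫*⟪b,c⟫*⟪c,a⟫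
      - ‖a‖^2*⟪b,c⟫^2 - ‖b‖^2*⟪c,a⟫^2 - ‖c‖^2*⟪a,b⟫^2 := by
  rw [inner3 a, normsq3, normsq3, normsq3, inner3, inner3, inner3,
    cross_apply0, cross_apply1, cross_apply2]; ring

lemma normsq_smul (c : ℝ) (u : E3) : ‖c • u‖^2 = c^2 * ‖u‖^2 := by
  rw [norm_smul]; simp [mul_pow, sq_abs]

lemma Nqr_pos {q r : ℝ} {a : E3 × E3 × E3} (h : a ∈ Nqr q r) :
    0 < ‖a.1‖^2 ∧ 0 < ‖a.2.1‖^2 ∧ 0 < ‖a.2.2‖^2 ∧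
      Phi a ^ 2 = ‖a.1‖^2 * ‖a.2.1‖^2 * ‖a.2.2‖^2 := by
  obtain ⟨h1, h2, h3, h4, h5, h6⟩ := h
  have hg : Phi a ^ 2 = ‖a.1‖^2 * ‖a.2.1‖^2 * ‖a.2.2‖^2 := by
    rw [Phi, gram_id, h1, h2, h3]; ring
  have hΦ : 0 < Phi a ^ 2 := by nlinarith [h6]
  have n1 : 0 ≤ ‖a.1‖^2 := sq_nonneg _
  have n2 : 0 ≤ ‖a.2.1‖^2 := sq_nonneg _
  have n3 : 0 ≤ ‖a.2.2‖^2 := sq_nonneg _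
  refine ⟨?_, ?_, ?_, hg⟩ <;> nlinarith [mul_nonneg n2 n3, mul_nonneg n1 n3, mul_nonneg n1 n2]

lemma a1_eq {q r : ℝ} {a : E3 × E3 × E3} (h : a ∈ Nqr q r) :
    a.1 = (Phi a / (‖a.2.1‖^2 * ‖a.2.2‖^2)) • cross a.2.1 a.2.2 := by
  obtain ⟨p1, p2, p3, hg⟩ := Nqr_pos h
  obtain ⟨h1, h2, h3, h4, h5, h6⟩ := h
  set w := cross a.2.1 a.2.2 with hw
  set c := Phi a / (‖a.2.1‖^2 * ‖a.2.2‖^2) with hc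
  have hwn : ‖w‖^2 = ‖a.2.1‖^2 * ‖a.2.2‖^2 := by rw [hw, lagrange, h2]; ring
  have key : ‖a.1 - c • w‖^2 = 0 := by
    rw [norm_sub_sq_real, real_inner_smul_right, normsq_smul, hwn]
    have : (⟪a.1, w⟫ : ℝ) = Phi a := rfl
    rw [this, hc]
    field_simp
    have hD : ‖a.2.1‖^2 * ‖a.2.2‖^2 ≠ 0 := (mul_pos p2 p3).ne'
    have hY : Phi a ^ 2 / (‖a.2.1‖^2 * ‖a.2.2‖^2) = ‖a.1‖^2 := by
      rw [hg, mul_assoc, mul_div_assoc, div_self hD, mul_one]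
    linear_combination -hY
  have : a.1 - c • w = 0 := by
    have := (pow_eq_zero_iff (n := 2) (by norm_num)).mp key
    exact norm_eq_zero.mp this
  exact sub_eq_zero.mp this

def Fm (r : ℝ) (a : E3 × E3 × E3) : Fin 3 → ℂ := fun i =>
  (↑(Real.sqrt ((‖a.2.1‖^2 - r) / ‖a.2.1‖^2) * a.2.1 i) : ℂ) + (↑(a.2.2 i) : ℂ) * Complex.I

def Re3 (v : Fin 3 → ℂ) : E3 := (WithLp.equiv 2 (Fin 3 → ℝ)).symm fun i => (v i).re
def Im3 (v : Fin 3 → ℂ) : E3 := (WithLp.equiv 2 (Fin 3 → ℝ)).symm fun i => (v i).im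

def Gm (q r : ℝ) (v : Fin 3 → ℂ) : E3 × E3 × E3 :=
  ((-(Real.sqrt (‖Re3 v‖^2 + q + r) / ‖Re3 v‖^2)) • cross (Re3 v) (Im3 v),
   Real.sqrt ((‖Re3 v‖^2 + r) / ‖Re3 v‖^2) • Re3 v,
   Im3 v)

lemma Re3_apply (v : Fin 3 → ℂ) (i : Fin 3) : Re3 v i = (v i).re := rfl
lemma Im3_apply (v : Fin 3 → ℂ) (i : Fin 3) : Im3 v i = (v i).im := rfl
lemma Fm_re (r : ℝ) (a : E3 × E3 × E3) (i : Fin 3) :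
    (Fm r a i).re = Real.sqrt ((‖a.2.1‖^2 - r) / ‖a.2.1‖^2) * a.2.1 i := by simp [Fm]
lemma Fm_im (r : ℝ) (a : E3 × E3 × E3) (i : Fin 3) : (Fm r a i).im = a.2.2 i := by simp [Fm]

lemma nil_facts {v : Fin 3 → ℂ} (hv : v ∈ nilCone) :
    ‖Re3 v‖^2 = ‖Im3 v‖^2 ∧ ⟪Re3 v, Im3 v⟫ = 0 ∧ 0 < ‖Re3 v‖^2 := by
  obtain ⟨h0, hne⟩ := hv
  have hre := congrArg Complex.re h0
  have him := congrArg Complex.im h0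
  simp only [Complex.add_re, Complex.add_im, pow_two, Complex.mul_re, Complex.mul_im,
    Complex.zero_re, Complex.zero_im] at hre him
  have hxy : ‖Re3 v‖^2 = ‖Im3 v‖^2 := by
    rw [normsq3, normsq3]
    simp only [Re3_apply, Im3_apply]
    nlinarith [hre]
  have hin : ⟪Re3 v, Im3 v⟫ = 0 := by
    rw [inner3]
    simp only [Re3_apply, Im3_apply]
    nlinarith [him]
  refine ⟨hxy, hin, ?_⟩
  rcases lt_or_eq_of_le (sq_nonneg ‖Re3 v‖) with h | h
  · exact h
  · exfalso
    apply hne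
    have hx : Re3 v = 0 := by
      rw [← norm_eq_zero]; nlinarith [h]
    have hy : Im3 v = 0 := by
      rw [← norm_eq_zero]; nlinarith [hxy, h]
    funext i
    apply Complex.ext
    · have : Re3 v i = (0 : E3) i := by rw [hx]
      simpa [Re3_apply] using this
    · have : Im3 v i = (0 : E3) i := by rw [hy]
      simpa [Im3_apply] using this

lemma Fmem {q r : ℝ} (hr : 0 < r) {a : E3 × E3 × E3} (ha : a ∈ Nqr q r) :
    Fm r a ∈ nilCone := by
  obtain ⟨p1, p2, p3, hg⟩ := Nqr_pos ha
  obtain ⟨h1, h2, h3, h4, h5, h6⟩ := ha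
  have htr : ‖a.2.1‖^2 - r = ‖a.2.2‖^2 := by linarith
  have hk2' : (Real.sqrt ((‖a.2.1‖^2 - r) / ‖a.2.1‖^2))^2 * ‖a.2.1‖^2 = ‖a.2.1‖^2 - r := by
    rw [Real.sq_sqrt (div_nonneg (htr ▸ sq_nonneg _) p2.le)]
    field_simp
    exact mul_div_cancel_left₀ _ (fun h => by simp [h] at p2)
  have h2' : a.2.1 0 * a.2.2 0 + a.2.1 1 * a.2.2 1 + a.2.1 2 * a.2.2 2 = 0 := by
    rw [inner3] at h2; exact h2
  have hx : ‖a.2.1‖^2 = a.2.1 0^2 + a.2.1 1^2 + a.2.1 2^2 := normsq3 _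
  have hy : ‖a.2.1‖^2 - r = a.2.2 0^2 + a.2.2 1^2 + a.2.2 2^2 := by
    rw [htr]; exact normsq3 _
  constructor
  · apply Complex.ext
    · simp only [Complex.add_re, pow_two, Complex.mul_re, Complex.zero_re]
      rw [Fm_re, Fm_re, Fm_re, Fm_im, Fm_im, Fm_im]
      linear_combination (-(Real.sqrt ((‖a.2.1‖^2 - r) / ‖a.2.1‖^2))^2) * hx + hk2' + hy
    · simp only [Complex.add_im, pow_two, Complex.mul_im, Complex.zero_im]
      rw [Fm_re, Fm_re, Fm_re, Fm_im, Fm_im, Fm_im]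
      linear_combination (2 * Real.sqrt ((‖a.2.1‖^2 - r) / ‖a.2.1‖^2)) * h2'
  · intro h0
    have hz : ∀ i, a.2.2 i = 0 := by
      intro i
      have h0' := congrArg Complex.im (congrFun h0 i)
      rw [Fm_im] at h0'
      simpa using h0'
    have : ‖a.2.2‖^2 = 0 := by rw [normsq3, hz 0, hz 1, hz 2]; ring
    linarith

lemma Gmem {q r : ℝ} (hq : 0 ≤ q) (hr : 0 < r) {v : Fin 3 → ℂ} (hv : v ∈ nilCone) :
    Gm q r v ∈ Nqr q r := by
  obtain ⟨hn, hin, hs⟩ := nil_facts hv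
  have hyx : ‖Im3 v‖^2 = ‖Re3 v‖^2 := hn.symm
  have hwn : ‖cross (Re3 v) (Im3 v)‖^2 = ‖Re3 v‖^2 * ‖Re3 v‖^2 := by
    rw [lagrange, hin, ← hn]; ring
  have hc1 : 0 < Real.sqrt (‖Re3 v‖^2 + q + r) / ‖Re3 v‖^2 :=
    div_pos (Real.sqrt_pos.mpr (by linarith)) hs
  have hc2 : 0 < Real.sqrt ((‖Re3 v‖^2 + r) / ‖Re3 v‖^2) :=
    Real.sqrt_pos.mpr (div_pos (by linarith) hs)
  have hc1sq : (Real.sqrt (‖Re3 v‖^2 + q + r))^2 = ‖Re3 v‖^2 + q + r :=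
    Real.sq_sqrt (by linarith)
  have hc2sq : (Real.sqrt ((‖Re3 v‖^2 + r) / ‖Re3 v‖^2))^2 * ‖Re3 v‖^2 = ‖Re3 v‖^2 + r := by
    rw [Real.sq_sqrt (div_nonneg (by linarith) hs.le)]
    field_simp
    exact div_self (fun h => by simp [h] at hs)
  refine ⟨?_, ?_, ?_, ?_, ?_, ?_⟩
  · show ⟪_ • cross (Re3 v) (Im3 v), _ • Re3 v⟫ = 0
    rw [real_inner_smul_left, real_inner_smul_right, inner_cross_self_left]
    ring
  · show ⟪_ • Re3 v, Im3 v⟫ = 0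
    rw [real_inner_smul_left, hin]; ring
  · show ⟪Im3 v, _ • cross (Re3 v) (Im3 v)⟫ = 0
    rw [real_inner_smul_right, real_inner_comm, inner_cross_self_right]; ring
  · show ‖_ • cross (Re3 v) (Im3 v)‖^2 - ‖_ • Re3 v‖^2 = q
    rw [normsq_smul, normsq_smul, hwn]
    rw [neg_pow, div_pow, hc1sq]
    have : (Real.sqrt ((‖Re3 v‖^2 + r) / ‖Re3 v‖^2))^2 * ‖Re3 v‖^2 = ‖Re3 v‖^2 + r := hc2sq
    field_simp
    rw [mul_div_cancel_left₀ _ (fun h => by simp [h] at hs)]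
    nlinarith [this]
  · show ‖_ • Re3 v‖^2 - ‖Im3 v‖^2 = r
    rw [normsq_smul, hyx]
    linarith [hc2sq]
  · show Phi (Gm q r v) < 0
    rw [Phi]
    show ⟪_ • cross (Re3 v) (Im3 v), cross (_ • Re3 v) (Im3 v)⟫ < 0
    rw [cross_smul_left, real_inner_smul_left, real_inner_smul_right,
      real_inner_self_eq_norm_sq, hwn]
    have h1 : 0 < ‖Re3 v‖^2 * ‖Re3 v‖^2 := mul_pos hs hs
    nlinarith [mul_pos (mul_pos hc1 hc2) h1]

lemma neg_eq_of_sq {x y : ℝ} (hx : x < 0) (hy : y < 0) (h : x^2 = y^2) : x = y := by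
  nlinarith [sq_nonneg (x - y), sq_nonneg (x + y)]

lemma GF {q r : ℝ} (hq : 0 ≤ q) (hr : 0 < r) {a : E3 × E3 × E3} (ha : a ∈ Nqr q r) :
    Gm q r (Fm r a) = a := by
  obtain ⟨p1, p2, p3, hg⟩ := Nqr_pos ha
  have haeq := a1_eq ha
  obtain ⟨h1, h2, h3, h4, h5, h6⟩ := ha
  have htr : ‖a.2.1‖^2 - r = ‖a.2.2‖^2 := by linarith
  have htrpos : 0 < ‖a.2.1‖^2 - r := by rw [htr]; exact p3
  have hRe : Re3 (Fm r a) = Real.sqrt ((‖a.2.1‖^2 - r) / ‖a.2.1‖^2) • a.2.1 := by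
    refine E3ext' ?_ ?_ ?_ <;> rw [Re3_apply, Fm_re, smul_apply3]
  have hIm : Im3 (Fm r a) = a.2.2 := by
    refine E3ext' ?_ ?_ ?_ <;> rw [Im3_apply, Fm_im]
  have hk2 : (Real.sqrt ((‖a.2.1‖^2 - r) / ‖a.2.1‖^2))^2 = (‖a.2.1‖^2 - r) / ‖a.2.1‖^2 :=
    Real.sq_sqrt (div_nonneg htrpos.le p2.le)
  have hkpos : 0 < Real.sqrt ((‖a.2.1‖^2 - r) / ‖a.2.1‖^2) :=
    Real.sqrt_pos.mpr (div_pos htrpos p2)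
  have hs : ‖Re3 (Fm r a)‖^2 = ‖a.2.1‖^2 - r := by
    rw [hRe, normsq_smul, hk2]; field_simp
    exact div_self (fun h => by simp [h] at p2)
  show ((-(Real.sqrt (‖Re3 (Fm r a)‖^2 + q + r) / ‖Re3 (Fm r a)‖^2)) •
      cross (Re3 (Fm r a)) (Im3 (Fm r a)),
    Real.sqrt ((‖Re3 (Fm r a)‖^2 + r) / ‖Re3 (Fm r a)‖^2) • Re3 (Fm r a),
    Im3 (Fm r a)) = (a.1, a.2.1, a.2.2)
  rw [hs, hRe, hIm, Prod.mk.injEq, Prod.mk.injEq]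
  refine ⟨?_, ?_, rfl⟩
  · rw [cross_smul_left, smul_smul, haeq, ← htr]
    congr 1
    have hE : ‖a.2.1‖^2 - r + q + r = ‖a.1‖^2 := by linarith
    have hE' : (Real.sqrt (‖a.2.1‖^2 - r + q + r))^2 = ‖a.2.1‖^2 - r + q + r :=
      Real.sq_sqrt (by nlinarith [p1])
    have hsqrtpos : 0 < Real.sqrt (‖a.2.1‖^2 - r + q + r) :=
      Real.sqrt_pos.mpr (by nlinarith [p1])
    apply neg_eq_of_sq
    · have : 0 < Real.sqrt (‖a.2.1‖^2 - r + q + r) / (‖a.2.1‖^2 - r) :=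
        div_pos hsqrtpos htrpos
      nlinarith [mul_pos this hkpos]
    · exact div_neg_of_neg_of_pos h6 (mul_pos p2 htrpos)
    · have ht0 : ‖a.2.1‖^2 ≠ 0 := p2.ne'
      have htr0 : ‖a.2.1‖^2 - r ≠ 0 := htrpos.ne'
      rw [mul_pow, neg_sq, div_pow, div_pow, hE', hE, hk2, hg, ← htr]
      field_simp
  · rw [smul_smul, show ‖a.2.1‖^2 - r + r = ‖a.2.1‖^2 from by ring,
      ← Real.sqrt_mul (div_nonneg p2.le htrpos.le),
      show ‖a.2.1‖^2 / (‖a.2.1‖^2 - r) * ((‖a.2.1‖^2 - r) / ‖a.2.1‖^2) = 1 from by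
        field_simp
        exact div_self (fun h => by simp [h] at p2), Real.sqrt_one, one_smul]

lemma FG {q r : ℝ} (hq : 0 ≤ q) (hr : 0 < r) {v : Fin 3 → ℂ} (hv : v ∈ nilCone) :
    Fm r (Gm q r v) = v := by
  obtain ⟨hn, hin, hs⟩ := nil_facts hv
  have h21 : (Gm q r v).2.1 = Real.sqrt ((‖Re3 v‖^2 + r) / ‖Re3 v‖^2) • Re3 v := rfl
  have h22 : (Gm q r v).2.2 = Im3 v := rfl
  have hns : ‖(Gm q r v).2.1‖^2 = ‖Re3 v‖^2 + r := by
    rw [h21, normsq_smul, Real.sq_sqrt (div_nonneg (by linarith) hs.le)]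
    field_simp
    exact div_self (fun h => by simp [h] at hs)
  funext i
  apply Complex.ext
  · rw [Fm_re, hns, h21, smul_apply3,
      show ‖Re3 v‖^2 + r - r = ‖Re3 v‖^2 from by ring, ← mul_assoc,
      ← Real.sqrt_mul (div_nonneg hs.le (by linarith)),
      show ‖Re3 v‖^2 / (‖Re3 v‖^2 + r) * ((‖Re3 v‖^2 + r) / ‖Re3 v‖^2) = 1 from by
        have : ‖Re3 v‖^2 + r ≠ 0 := by linarith
        field_simp
        exact div_self (fun h => by simp [h] at hs), Real.sqrt_one, one_mul, Re3_apply]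
  · rw [Fm_im, h22, Im3_apply]

lemma cont_cross : Continuous fun p : E3 × E3 => cross p.1 p.2 := by
  have hev1 : ∀ i : Fin 3, Continuous fun p : E3 × E3 => p.1 i :=
    fun i => (PiLp.continuous_apply 2 _ i).comp continuous_fst
  have hev2 : ∀ i : Fin 3, Continuous fun p : E3 × E3 => p.2 i :=
    fun i => (PiLp.continuous_apply 2 _ i).comp continuous_snd
  have key : Continuous fun p : E3 × E3 => ((WithLp.equiv 2 (Fin 3 → ℝ)) (cross p.1 p.2)) := by
    apply continuous_pi
    intro i
    fin_cases i
    · exact Continuous.congr (((hev1 1).mul (hev2 2)).sub ((hev1 2).mul (hev2 1)))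
        (fun p => (cross_apply0 p.1 p.2).symm)
    · exact Continuous.congr (((hev1 2).mul (hev2 0)).sub ((hev1 0).mul (hev2 2)))
        (fun p => (cross_apply1 p.1 p.2).symm)
    · exact Continuous.congr (((hev1 0).mul (hev2 1)).sub ((hev1 1).mul (hev2 0)))
        (fun p => (cross_apply2 p.1 p.2).symm)
  exact Continuous.congr ((PiLp.continuous_toLp 2 (fun _ : Fin 3 => ℝ)).comp key)
    (fun p => rfl)

lemma contF (q r : ℝ) : Continuous fun a : Nqr q r => Fm r (a : E3 × E3 × E3) := by
  apply continuous_pi; intro i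
  have hnorm : Continuous fun a : Nqr q r => ‖(a : E3 × E3 × E3).2.1‖^2 :=
    (continuous_subtype_val.snd.fst).norm.pow 2
  have hne : ∀ a : Nqr q r, ‖(a : E3 × E3 × E3).2.1‖^2 ≠ 0 := fun a => (Nqr_pos a.2).2.1.ne'
  have hk : Continuous fun a : Nqr q r =>
      Real.sqrt ((‖(a : E3 × E3 × E3).2.1‖^2 - r) / ‖(a : E3 × E3 × E3).2.1‖^2) :=
    Real.continuous_sqrt.comp ((hnorm.sub continuous_const).div hnorm hne)
  have he1 : Continuous fun a : Nqr q r => (a : E3 × E3 × E3).2.1 i :=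
    (PiLp.continuous_apply 2 _ i).comp (continuous_subtype_val.snd.fst)
  have he2 : Continuous fun a : Nqr q r => (a : E3 × E3 × E3).2.2 i :=
    (PiLp.continuous_apply 2 _ i).comp (continuous_subtype_val.snd.snd)
  exact (Complex.continuous_ofReal.comp (hk.mul he1)).add
    ((Complex.continuous_ofReal.comp he2).mul continuous_const)

lemma contG (q r : ℝ) : Continuous fun v : nilCone => Gm q r (v : Fin 3 → ℂ) := by
  have hRe : Continuous fun v : nilCone => Re3 (v : Fin 3 → ℂ) :=
    (PiLp.continuous_toLp 2 (fun _ : Fin 3 => ℝ)).comp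
      (continuous_pi fun i =>
        Complex.continuous_re.comp ((continuous_apply i).comp continuous_subtype_val))
  have hIm : Continuous fun v : nilCone => Im3 (v : Fin 3 → ℂ) :=
    (PiLp.continuous_toLp 2 (fun _ : Fin 3 => ℝ)).comp
      (continuous_pi fun i =>
        Complex.continuous_im.comp ((continuous_apply i).comp continuous_subtype_val))
  have hs : Continuous fun v : nilCone => ‖Re3 (v : Fin 3 → ℂ)‖^2 := hRe.norm.pow 2
  have hsne : ∀ v : nilCone, ‖Re3 (v : Fin 3 → ℂ)‖^2 ≠ 0 :=
    fun v => (nil_facts v.2).2.2.ne'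
  show Continuous fun v : nilCone =>
    ((-(Real.sqrt (‖Re3 (v : Fin 3 → ℂ)‖^2 + q + r) / ‖Re3 (v : Fin 3 → ℂ)‖^2)) •
        cross (Re3 (v : Fin 3 → ℂ)) (Im3 (v : Fin 3 → ℂ)),
     Real.sqrt ((‖Re3 (v : Fin 3 → ℂ)‖^2 + r) / ‖Re3 (v : Fin 3 → ℂ)‖^2) • Re3 (v : Fin 3 → ℂ),
     Im3 (v : Fin 3 → ℂ))
  refine Continuous.prodMk ?_ (Continuous.prodMk ?_ ?_)
  · exact (((Real.continuous_sqrt.comp ((hs.add continuous_const).add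
      continuous_const)).div hs hsne).neg).smul (cont_cross.comp (hRe.prodMk hIm))
  · exact (Real.continuous_sqrt.comp ((hs.add continuous_const).div hs hsne)).smul hRe
  · exact hIm


/-- Every type-2 leaf `N_{q,r}` (with `r > 0`) is homeomorphic to the nilpotent orbit of
`𝔰𝔩(2,ℂ)`. -/
theorem Nqr_type2_homeomorph_nilCone (q r : ℝ) (hq : 0 ≤ q) (hr : 0 < r) :
    Nonempty (Nqr q r ≃ₜ nilCone) := by
  exact ⟨{ toEquiv := { toFun := fun a => ⟨Fm r a.1, Fmem hr a.2⟩
                        invFun := fun v => ⟨Gm q r v.1, Gmem hq hr v.2⟩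
                        left_inv := fun a => Subtype.ext (GF hq hr a.2)
                        right_inv := fun v => Subtype.ext (FG hq hr v.2) }
           continuous_toFun := (contF q r).subtype_mk _
           continuous_invFun := (contG q r).subtype_mk _ }⟩

end
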